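/- Let 0 < x ≤ 1 and 0 < δ. Then ∫∫∫ dp dr dr' over p ∈ ℝ³, {|r| < 1 < |r+p|}, {|r'| < x < |r'−p|} of [1/(D + 2ρ^{2/3+δ}) − 1/D] in absolute value is bounded by C ρ^{2/3+δ} uniformly in x, where D = |r+p|² − |r|² + |r'−p|² − |r'|² > 0 on the domain. -/

import Mathlib

open MeasureTheory

namespace GapAux
open Set Metric ENNReal Real
open MeasureTheory Set Metric ENNReal Real
open intervalIntegral in
lemma myintegral_rpow {a b r : ℝ} (h : -1 < r) : ∫ x in a..b, x ^ r = (b ^ (r + 1) - a ^ (r + 1)) / (r + 1) := integral_rpow (Or.inl h)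

lemma lcA {α : Type*} [MeasurableSpace α] (μ : Measure α) {f : α → ℝ}
    (hf : Measurable f) (hnn : ∀ a, 0 ≤ f a) {V c θ s₀ : ℝ}
    (hV : 0 ≤ V) (hc : 0 ≤ c) (hθ : 1 < θ) (hs : 0 < s₀)
    (hb : ∀ t, 0 < t → μ {a | t < f a} ≤ min (ENNReal.ofReal V) (ENNReal.ofReal (c * t ^ (-θ)))) :
    ∫⁻ a, ENNReal.ofReal (f a) ∂μ ≤ ENNReal.ofReal (V * s₀ + c * s₀ ^ (1-θ) / (θ-1)) := by
  rw [lintegral_eq_lintegral_meas_lt μ (Filter.Eventually.of_forall hnn) hf.aemeasurable]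
  have hsplit : Ioi (0:ℝ) = Ioc 0 s₀ ∪ Ioi s₀ := (Ioc_union_Ioi_eq_Ioi hs.le).symm
  rw [hsplit]
  refine le_trans (lintegral_union_le _ _ _) ?_
  have h1 : ∫⁻ t in Ioc (0:ℝ) s₀, μ {a | t < f a} ≤ ENNReal.ofReal V * ENNReal.ofReal s₀ := by
    calc ∫⁻ t in Ioc (0:ℝ) s₀, μ {a | t < f a}
        ≤ ∫⁻ _ in Ioc (0:ℝ) s₀, ENNReal.ofReal V := by
          refine setLIntegral_mono' measurableSet_Ioc fun t ht => ?_
          exact le_trans (hb t ht.1) (min_le_left _ _)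
      _ = ENNReal.ofReal V * volume (Ioc (0:ℝ) s₀) := setLIntegral_const _ _
      _ = ENNReal.ofReal V * ENNReal.ofReal s₀ := by rw [Real.volume_Ioc, sub_zero]
  have h2 : ∫⁻ t in Ioi s₀, μ {a | t < f a} ≤ ENNReal.ofReal (c * s₀ ^ (1-θ) / (θ-1)) := by
    have hint : IntegrableOn (fun t : ℝ => c * t ^ (-θ)) (Ioi s₀) :=
      (integrableOn_Ioi_rpow_of_lt (by linarith) hs).const_mul c
    calc ∫⁻ t in Ioi s₀, μ {a | t < f a}
        ≤ ∫⁻ t in Ioi s₀, ENNReal.ofReal (c * t ^ (-θ)) := by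
          refine setLIntegral_mono' measurableSet_Ioi fun t ht => ?_
          exact le_trans (hb t (hs.trans ht)) (min_le_right _ _)
      _ = ENNReal.ofReal (∫ t in Ioi s₀, c * t ^ (-θ)) := by
          rw [ofReal_integral_eq_lintegral_ofReal hint]
          filter_upwards [self_mem_ae_restrict measurableSet_Ioi] with t ht
          have h0t : (0:ℝ) < t := hs.trans ht
          exact mul_nonneg hc (Real.rpow_nonneg h0t.le _)
      _ = ENNReal.ofReal (c * s₀ ^ (1-θ) / (θ-1)) := by
          rw [MeasureTheory.integral_const_mul, integral_Ioi_rpow_of_lt (by linarith) hs]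
          congr 1
          have hne : (1:ℝ) - θ ≠ 0 := by intro h; linarith
          have hne' : θ - 1 ≠ 0 := by intro h; linarith
          have hAd : -s₀ ^ (-θ+1) / (-θ+1) = s₀ ^ (1-θ) / (θ - 1) := by
            rw [show -θ+1 = 1-θ by ring]; field_simp; ring
          rw [hAd, mul_div_assoc]
  refine le_trans (add_le_add h1 h2) ?_
  rw [← ENNReal.ofReal_mul hV, ← ENNReal.ofReal_add (mul_nonneg hV hs.le)
    (div_nonneg (mul_nonneg hc (Real.rpow_nonneg hs.le _)) (by linarith))]

lemma lcB {α : Type*} [MeasurableSpace α] (μ : Measure α) {f : α → ℝ}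
    (hf : Measurable f) (hnn : ∀ a, 0 ≤ f a) {c θ T : ℝ}
    (hc : 0 ≤ c) (hθ1 : θ < 1) (hθ0 : 0 < θ) (hT : 0 < T)
    (hb : ∀ t, 0 < t → μ {a | t < f a} ≤ ENNReal.ofReal (c * t ^ (-θ)))
    (hb0 : ∀ t, T ≤ t → μ {a | t < f a} = 0) :
    ∫⁻ a, ENNReal.ofReal (f a) ∂μ ≤ ENNReal.ofReal (c * T ^ (1-θ) / (1-θ)) := by
  rw [lintegral_eq_lintegral_meas_lt μ (Filter.Eventually.of_forall hnn) hf.aemeasurable]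
  have hsplit : Ioi (0:ℝ) = Ioc 0 T ∪ Ioi T := (Ioc_union_Ioi_eq_Ioi hT.le).symm
  rw [hsplit]
  refine le_trans (lintegral_union_le _ _ _) ?_
  have h2 : ∫⁻ t in Ioi T, μ {a | t < f a} = 0 := by
    rw [← lintegral_zero (μ := volume.restrict (Ioi T))]
    refine setLIntegral_congr_fun measurableSet_Ioi (fun t ht => ?_)
    exact hb0 t (le_of_lt ht)
  have hint : IntegrableOn (fun t : ℝ => c * t ^ (-θ)) (Ioc 0 T) := by
    have := intervalIntegral.intervalIntegrable_rpow' (a := 0) (b := T) (r := -θ) (by linarith)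
    exact ((intervalIntegrable_iff_integrableOn_Ioc_of_le hT.le).mp this).const_mul c
  have h1 : ∫⁻ t in Ioc (0:ℝ) T, μ {a | t < f a} ≤ ENNReal.ofReal (c * T ^ (1-θ) / (1-θ)) := by
    calc ∫⁻ t in Ioc (0:ℝ) T, μ {a | t < f a}
        ≤ ∫⁻ t in Ioc (0:ℝ) T, ENNReal.ofReal (c * t ^ (-θ)) := by
          refine setLIntegral_mono' measurableSet_Ioc fun t ht => ?_
          exact hb t ht.1
      _ = ENNReal.ofReal (∫ t in Ioc (0:ℝ) T, c * t ^ (-θ)) := by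
          rw [ofReal_integral_eq_lintegral_ofReal hint]
          filter_upwards [self_mem_ae_restrict measurableSet_Ioc] with t ht
          exact mul_nonneg hc (Real.rpow_nonneg ht.1.le _)
      _ = ENNReal.ofReal (c * T ^ (1-θ) / (1-θ)) := by
          rw [MeasureTheory.integral_const_mul, ← intervalIntegral.integral_of_le hT.le,
            myintegral_rpow (by linarith : (-1:ℝ) < -θ),
            Real.zero_rpow (by linarith : (0:ℝ) < -θ+1).ne', show -θ + 1 = 1 - θ by ring]
          congr 1
          ring
  rw [h2, add_zero]
  exact h1

noncomputable section
abbrev E3 := EuclideanSpace ℝ (Fin 3)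
abbrev E2 := EuclideanSpace ℝ (Fin 2)
def κ₁ : ℝ := (volume (ball (0:E3) 1)).toReal
def κ₂ : ℝ := (volume (ball (0:E2) 1)).toReal
lemma κ₁_nonneg : 0 ≤ κ₁ := ENNReal.toReal_nonneg
lemma κ₂_nonneg : 0 ≤ κ₂ := ENNReal.toReal_nonneg

lemma vol_ball3 (R : ℝ) (hR : 0 ≤ R) :
    volume (ball (0:E3) R) = ENNReal.ofReal (κ₁ * R^3) := by
  rw [Measure.addHaar_ball _ _ hR, finrank_euclideanSpace_fin]
  conv_lhs => rw [← ENNReal.ofReal_toReal (measure_ball_lt_top (x := (0:E3)) (r := 1)).ne]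
  rw [← ENNReal.ofReal_mul (by positivity), mul_comm]
  rfl

lemma vol_ball2 (R : ℝ) (hR : 0 ≤ R) :
    volume (ball (0:E2) R) = ENNReal.ofReal (κ₂ * R^2) := by
  rw [Measure.addHaar_ball _ _ hR, finrank_euclideanSpace_fin]
  conv_lhs => rw [← ENNReal.ofReal_toReal (measure_ball_lt_top (x := (0:E2)) (r := 1)).ne]
  rw [← ENNReal.ofReal_mul (by positivity), mul_comm]
  rfl

lemma vol_cball2 (R : ℝ) (hR : 0 ≤ R) :
    volume (closedBall (0:E2) R) = ENNReal.ofReal (κ₂ * R^2) := by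
  rw [Measure.addHaar_closedBall_eq_addHaar_ball]; exact vol_ball2 R hR

lemma annulus2 (c d : ℝ) (hcd : c ≤ d) :
    volume {y : E2 | c < ‖y‖^2 ∧ ‖y‖^2 < d} ≤ ENNReal.ofReal (κ₂ * (d - c)) := by
  rcases le_or_gt d 0 with hd | hd
  · have : {y : E2 | c < ‖y‖^2 ∧ ‖y‖^2 < d} = ∅ := by
      ext y; simp only [mem_setOf_eq, mem_empty_iff_false, iff_false, not_and]
      intro _; nlinarith [sq_nonneg ‖y‖]
    rw [this, measure_empty]; exact zero_le
  rcases le_or_gt c 0 with hc | hc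
  · have hsub : {y : E2 | c < ‖y‖^2 ∧ ‖y‖^2 < d} ⊆ ball 0 (Real.sqrt d) := by
      intro y hy
      simp only [mem_ball, dist_zero_right]
      have := hy.2
      nlinarith [Real.sq_sqrt hd.le, Real.sqrt_nonneg d, norm_nonneg y,
        abs_nonneg (‖y‖ - Real.sqrt d)]
    refine le_trans (measure_mono hsub) ?_
    rw [vol_ball2 _ (Real.sqrt_nonneg d), Real.sq_sqrt hd.le]
    exact ENNReal.ofReal_le_ofReal (by nlinarith [κ₂_nonneg])
  · have hsub : {y : E2 | c < ‖y‖^2 ∧ ‖y‖^2 < d}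
        ⊆ ball 0 (Real.sqrt d) \ closedBall 0 (Real.sqrt c) := by
      intro y hy
      simp only [mem_setOf_eq] at hy
      constructor
      · simp only [mem_ball, dist_zero_right]
        exact (Real.lt_sqrt (norm_nonneg y)).mpr hy.2
      · simp only [mem_closedBall, dist_zero_right, not_le]
        have := Real.sqrt_lt_sqrt hc.le hy.1
        rwa [Real.sqrt_sq (norm_nonneg y)] at this
    refine le_trans (measure_mono hsub) ?_
    have hcd' : Real.sqrt c ≤ Real.sqrt d := Real.sqrt_le_sqrt hcd
    rcases eq_or_lt_of_le hcd' with he | hlt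
    · have : ball (0:E2) (Real.sqrt d) \ closedBall 0 (Real.sqrt c) = ∅ := by
        rw [← he]; exact diff_eq_empty.mpr ball_subset_closedBall
      rw [this, measure_empty]; exact zero_le
    · rw [measure_diff (closedBall_subset_ball hlt)
        measurableSet_closedBall.nullMeasurableSet measure_closedBall_lt_top.ne,
        vol_ball2 _ (Real.sqrt_nonneg d), vol_cball2 _ (Real.sqrt_nonneg c),
        Real.sq_sqrt hd.le, Real.sq_sqrt hc.le]
      rw [← ENNReal.ofReal_sub _ (mul_nonneg κ₂_nonneg hc.le)]
      exact ENNReal.ofReal_le_ofReal (le_of_eq (by ring))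

lemma vol_cball3 (R : ℝ) (hR : 0 ≤ R) :
    volume (closedBall (0:E3) R) = ENNReal.ofReal (κ₁ * R^3) := by
  rw [Measure.addHaar_closedBall_eq_addHaar_ball]; exact vol_ball3 R hR

lemma shell3 (R u : ℝ) (hR : 0 ≤ R) (hR1 : R ≤ 1) (hu : 0 < u) :
    volume {y : E3 | ‖y‖ < R ∧ R^2 - u < ‖y‖^2} ≤ ENNReal.ofReal ((3/2) * κ₁ * u) := by
  rcases le_or_gt (R^2) u with hc | hc
  · -- whole ball
    have hsub : {y : E3 | ‖y‖ < R ∧ R^2 - u < ‖y‖^2} ⊆ ball 0 R := fun y hy => by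
      simp only [mem_ball, dist_zero_right]; exact hy.1
    refine le_trans (measure_mono hsub) ?_
    rw [vol_ball3 R hR]
    refine ENNReal.ofReal_le_ofReal ?_
    have h3 : R^3 ≤ R^2 := pow_le_pow_of_le_one hR hR1 (by norm_num)
    nlinarith [κ₁_nonneg, mul_nonneg κ₁_nonneg hu.le]
  · have hc0 : 0 ≤ R^2 - u := by linarith
    have hsub : {y : E3 | ‖y‖ < R ∧ R^2 - u < ‖y‖^2}
        ⊆ ball 0 R \ closedBall 0 (Real.sqrt (R^2 - u)) := by
      intro y hy
      simp only [mem_setOf_eq] at hy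
      constructor
      · simp only [mem_ball, dist_zero_right]; exact hy.1
      · simp only [mem_closedBall, dist_zero_right, not_le]
        have := Real.sqrt_lt_sqrt hc0 hy.2
        rwa [Real.sqrt_sq (norm_nonneg y)] at this
    refine le_trans (measure_mono hsub) ?_
    set b := Real.sqrt (R^2 - u) with hbdef
    have hb0 : 0 ≤ b := Real.sqrt_nonneg _
    have hb2 : b^2 = R^2 - u := Real.sq_sqrt hc0
    have hbR : b < R := by
      have h := Real.sqrt_lt_sqrt hc0 (show R^2 - u < R^2 by linarith)
      rwa [Real.sqrt_sq hR] at h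
    rw [measure_diff (closedBall_subset_ball hbR)
      measurableSet_closedBall.nullMeasurableSet measure_closedBall_lt_top.ne,
      vol_ball3 R hR, vol_cball3 b hb0,
      ← ENNReal.ofReal_sub _ (mul_nonneg κ₁_nonneg (by positivity))]
    refine ENNReal.ofReal_le_ofReal ?_
    have key : R^3 - b^3 ≤ (3/2) * u := by
      nlinarith [mul_nonneg (sq_nonneg (R - b)) (by linarith : (0:ℝ) ≤ R + 2*b),
        mul_nonneg hu.le hb0]
    nlinarith [κ₁_nonneg, mul_le_mul_of_nonneg_left key κ₁_nonneg]

open scoped RealInnerProductSpace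

lemma normsq3 (x : E3) : ‖x‖^2 = ∑ i, x i ^ 2 := by
  rw [EuclideanSpace.norm_eq, Real.sq_sqrt (by positivity)]
  simp [Real.norm_eq_abs, sq_abs]

lemma normsq2 (y : E2) : ‖y‖^2 = ∑ i, y i ^ 2 := by
  rw [EuclideanSpace.norm_eq, Real.sq_sqrt (by positivity)]
  simp [Real.norm_eq_abs, sq_abs]

lemma slabshell (w : E3) (hw : ‖w‖ = 1) (u a b : ℝ) (hu : 0 < u) :
    volume {r : E3 | (‖r‖ < 1 ∧ 1 - u < ‖r‖^2) ∧ a < ⟪r, w⟫ ∧ ⟪r, w⟫ < b}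
      ≤ ENNReal.ofReal (κ₂ * u * (b - a)) := by
  classical
  set e₀ : E3 := EuclideanSpace.single 0 1 with he₀
  have he₀n : ‖e₀‖ = ‖w‖ := by
    rw [hw, he₀, EuclideanSpace.norm_single]; norm_num
  set A : Set E3 := {r : E3 | (‖r‖ < 1 ∧ 1 - u < ‖r‖^2) ∧ a < ⟪r, w⟫ ∧ ⟪r, w⟫ < b} with hA
  have hAmeas : MeasurableSet A := by
    have : IsOpen A := ((isOpen_lt (by fun_prop) (by fun_prop)).and
      (isOpen_lt (by fun_prop) (by fun_prop))).and
      ((isOpen_lt continuous_const (continuous_id.inner continuous_const)).and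
        (isOpen_lt (continuous_id.inner continuous_const) continuous_const))
    exact this.measurableSet
  set f : E3 ≃ₗᵢ[ℝ] E3 := Submodule.reflection (ℝ ∙ (e₀ - w))ᗮ with hfdef
  have hfe : f e₀ = w := Submodule.reflection_sub he₀n
  have hfw : f w = e₀ := by
    rw [← hfe, hfdef, Submodule.reflection_reflection]
  have hvol : volume A = volume (f ⁻¹' A) :=
    ((f.measurePreserving).measure_preimage hAmeas.nullMeasurableSet).symm
  have hpre : f ⁻¹' A = {r : E3 | (‖r‖ < 1 ∧ 1 - u < ‖r‖^2) ∧ a < r 0 ∧ r 0 < b} := by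
    ext r
    have h1 : ‖f r‖ = ‖r‖ := f.norm_map r
    have h2 : ⟪f r, w⟫ = r 0 := by
      calc ⟪f r, w⟫ = ⟪f r, f (f w)⟫ := by rw [hfdef, Submodule.reflection_reflection]
        _ = ⟪r, f w⟫ := f.inner_map_map r (f w)
        _ = r 0 := by rw [hfw, he₀, EuclideanSpace.inner_single_right]; simp
    simp only [mem_preimage, hA, mem_setOf_eq, h1, h2]
  rw [hvol, hpre]
  -- now pass to the pi type
  have hψ := EuclideanSpace.volume_preserving_symm_measurableEquiv_toLp (Fin 3)
  set B' : Set (Fin 3 → ℝ) :=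
    {x | (∑ i, x i ^ 2 < 1 ∧ 1 - u < ∑ i, x i ^ 2) ∧ a < x 0 ∧ x 0 < b} with hB'
  have hB'meas : MeasurableSet B' := by
    have : IsOpen B' := ((isOpen_lt (by fun_prop) (by fun_prop)).and
      (isOpen_lt (by fun_prop) (by fun_prop))).and
      ((isOpen_lt (by fun_prop) (by fun_prop)).and (isOpen_lt (by fun_prop) (by fun_prop)))
    exact this.measurableSet
  have hpre2 : (MeasurableEquiv.toLp 2 (Fin 3 → ℝ)).symm ⁻¹' B'
      = {r : E3 | (‖r‖ < 1 ∧ 1 - u < ‖r‖^2) ∧ a < r 0 ∧ r 0 < b} := by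
    ext r
    have hn : ‖r‖^2 = ∑ i, r i ^ 2 := normsq3 r
    have hiff : ‖r‖ < 1 ↔ ‖r‖^2 < 1 := by
      constructor
      · intro h; nlinarith [norm_nonneg r]
      · intro h; nlinarith [norm_nonneg r]
    simp only [mem_preimage, hB', mem_setOf_eq, hiff, hn]
    rfl
  rw [← hpre2, hψ.measure_preimage hB'meas.nullMeasurableSet]
  -- slice off the first coordinate
  have hχ := volume_preserving_piFinSuccAbove (fun _ : Fin 3 => ℝ) 0
  set C : Set (ℝ × (Fin 2 → ℝ)) :=
    {q | (q.1^2 + ∑ j, q.2 j ^ 2 < 1 ∧ 1 - u < q.1^2 + ∑ j, q.2 j ^ 2) ∧ a < q.1 ∧ q.1 < b}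
    with hC
  have hCmeas : MeasurableSet C := by
    have : IsOpen C := ((isOpen_lt (by fun_prop) (by fun_prop)).and
      (isOpen_lt (by fun_prop) (by fun_prop))).and
      ((isOpen_lt (by fun_prop) (by fun_prop)).and (isOpen_lt (by fun_prop) (by fun_prop)))
    exact this.measurableSet
  have hpre3 : (MeasurableEquiv.piFinSuccAbove (fun _ : Fin 3 => ℝ) 0) ⁻¹' C = B' := by
    ext x
    have happ : (MeasurableEquiv.piFinSuccAbove (fun _ : Fin 3 => ℝ) 0) x
        = (x 0, fun j => x j.succ) := by
      simp [MeasurableEquiv.piFinSuccAbove]; rfl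
    have hsum : ∑ i, x i ^ 2 = x 0 ^ 2 + ∑ j : Fin 2, x j.succ ^ 2 := by
      rw [Fin.sum_univ_succ]
    simp only [mem_preimage, happ, hC, hB', mem_setOf_eq, hsum]
  rw [← hpre3, hχ.measure_preimage hCmeas.nullMeasurableSet]
  -- product measure as an integral over slices
  have hprod : (volume : Measure (ℝ × (Fin 2 → ℝ))) C = ∫⁻ s : ℝ, volume (Prod.mk s ⁻¹' C) := by
    rw [← Measure.prod_apply hCmeas]; rfl
  rw [hprod]
  have hψ₂ := EuclideanSpace.volume_preserving_symm_measurableEquiv_toLp (Fin 2)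
  have hslice : ∀ s : ℝ, volume (Prod.mk s ⁻¹' C)
      ≤ (Ioo a b).indicator (fun _ => ENNReal.ofReal (κ₂ * u)) s := by
    intro s
    by_cases hs : s ∈ Ioo a b
    · rw [indicator_of_mem hs]
      have hsub : Prod.mk s ⁻¹' C ⊆ {y : Fin 2 → ℝ | 1 - u - s^2 < ∑ j, y j ^ 2 ∧ ∑ j, y j ^ 2 < 1 - s^2} := by
        intro y hy
        simp only [mem_preimage, hC, mem_setOf_eq] at hy
        exact ⟨by linarith [hy.1.2], by linarith [hy.1.1]⟩
      refine le_trans (measure_mono hsub) ?_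
      have hpre4 : (MeasurableEquiv.toLp 2 (Fin 2 → ℝ)).symm ⁻¹'
          {y : Fin 2 → ℝ | 1 - u - s^2 < ∑ j, y j ^ 2 ∧ ∑ j, y j ^ 2 < 1 - s^2}
          = {y : E2 | 1 - u - s^2 < ‖y‖^2 ∧ ‖y‖^2 < 1 - s^2} := by
        ext y
        simp only [mem_preimage, mem_setOf_eq, normsq2 y]
        rfl
      have hmeas5 : MeasurableSet {y : Fin 2 → ℝ | 1 - u - s^2 < ∑ j, y j ^ 2 ∧ ∑ j, y j ^ 2 < 1 - s^2} := by
        have : IsOpen {y : Fin 2 → ℝ | 1 - u - s^2 < ∑ j, y j ^ 2 ∧ ∑ j, y j ^ 2 < 1 - s^2} :=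
          (isOpen_lt (by fun_prop) (by fun_prop)).and (isOpen_lt (by fun_prop) (by fun_prop))
        exact this.measurableSet
      rw [← hψ₂.measure_preimage hmeas5.nullMeasurableSet, hpre4]
      refine le_trans (annulus2 (1 - u - s^2) (1 - s^2) (by linarith)) ?_
      exact ENNReal.ofReal_le_ofReal (le_of_eq (by ring))
    · rw [indicator_of_notMem hs]
      have : Prod.mk s ⁻¹' C = ∅ := by
        refine eq_empty_iff_forall_notMem.mpr fun y hy => ?_
        simp only [mem_preimage, hC, mem_setOf_eq] at hy
        exact hs (mem_Ioo.mpr hy.2)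
      rw [this, measure_empty]
  refine le_trans (lintegral_mono hslice) ?_
  rw [lintegral_indicator measurableSet_Ioo, setLIntegral_const, Real.volume_Ioo,
    ← ENNReal.ofReal_mul (mul_nonneg κ₂_nonneg hu.le)]


open scoped RealInnerProductSpace

/-! ### problem-specific functions -/

def lam (p r : E3) : ℝ := ‖r + p‖^2 - ‖r‖^2
def mu (p r' : E3) : ℝ := ‖r' - p‖^2 - ‖r'‖^2

def S1 (p : E3) : Set E3 := {r | ‖r‖ < 1 ∧ 1 < ‖r + p‖}
def S2 (x : ℝ) (p : E3) : Set E3 := {r' | ‖r'‖ < x ∧ x < ‖r' - p‖}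

def fl (p r : E3) : ℝ := (max (lam p r) 0) ^ (-(3:ℝ)/2)
def fm (p r' : E3) : ℝ := (max (mu p r') 0) ^ (-(1:ℝ)/2)

lemma fl_nonneg (p r : E3) : 0 ≤ fl p r := Real.rpow_nonneg (le_max_right _ _) _
lemma fm_nonneg (p r' : E3) : 0 ≤ fm p r' := Real.rpow_nonneg (le_max_right _ _) _

lemma fl_meas (p : E3) : Measurable (fun r => fl p r) := by unfold fl lam; fun_prop
lemma fm_meas (p : E3) : Measurable (fun r' => fm p r') := by unfold fm mu; fun_prop

lemma lam_pos {p r : E3} (hr : r ∈ S1 p) : 1 - ‖r‖^2 < lam p r ∧ 0 < lam p r := by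
  obtain ⟨h1, h2⟩ := hr
  have h3 : (1:ℝ) < ‖r + p‖^2 := by nlinarith [norm_nonneg (r + p)]
  have h4 : ‖r‖^2 < 1 := by nlinarith [norm_nonneg r]
  exact ⟨by unfold lam; nlinarith, by unfold lam; nlinarith⟩

lemma mu_pos {x : ℝ} {p r' : E3} (hx : 0 < x) (hr : r' ∈ S2 x p) :
    x^2 - ‖r'‖^2 < mu p r' ∧ 0 < mu p r' := by
  obtain ⟨h1, h2⟩ := hr
  have h3 : x^2 < ‖r' - p‖^2 := by nlinarith [norm_nonneg (r' - p)]
  have h4 : ‖r'‖^2 < x^2 := by nlinarith [norm_nonneg r']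
  exact ⟨by unfold mu; nlinarith, by unfold mu; nlinarith⟩

lemma S1_subset (p : E3) : S1 p ⊆ ball 0 1 := fun r hr => by
  simpa [mem_ball, dist_zero_right] using hr.1

lemma S2_subset {x : ℝ} (hx1 : x ≤ 1) (p : E3) : S2 x p ⊆ ball 0 1 := fun r hr => by
  simp only [mem_ball, dist_zero_right]; exact lt_of_lt_of_le hr.1 hx1

/-- distribution bound for `fm` on `S2` -/
lemma distr_mu {x : ℝ} (hx : 0 < x) (hx1 : x ≤ 1) (p : E3) {t : ℝ} (ht : 0 < t) :
    volume ({r' | t < fm p r'} ∩ S2 x p)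
      ≤ min (ENNReal.ofReal κ₁) (ENNReal.ofReal ((3/2) * κ₁ * t ^ (-(2:ℝ)))) := by
  refine le_min ?_ ?_
  · refine le_trans (measure_mono (fun r' hr' => S2_subset hx1 p hr'.2)) ?_
    rw [vol_ball3 1 zero_le_one]
    exact ENNReal.ofReal_le_ofReal (by norm_num)
  · have hu : (0:ℝ) < t ^ (-(2:ℝ)) := Real.rpow_pos_of_pos ht _
    have hsub : {r' | t < fm p r'} ∩ S2 x p
        ⊆ {y : E3 | ‖y‖ < x ∧ x^2 - t ^ (-(2:ℝ)) < ‖y‖^2} := by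
      rintro r' ⟨ht', hr'⟩
      obtain ⟨hm1, hm2⟩ := mu_pos hx hr'
      have hmax : max (mu p r') 0 = mu p r' := max_eq_left hm2.le
      have hlt : mu p r' < t ^ (-(2:ℝ)) := by
        have ht'' : t < (mu p r') ^ (-(1:ℝ)/2) := by
          simpa [fm, hmax] using ht'
        have h2 : ((mu p r') ^ (-(1:ℝ)/2)) ^ (-(2:ℝ)) < t ^ (-(2:ℝ)) :=
          Real.rpow_lt_rpow_of_neg ht ht'' (by norm_num)
        rwa [← Real.rpow_mul hm2.le, show (-(1:ℝ)/2) * (-(2:ℝ)) = 1 by norm_num,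
          Real.rpow_one] at h2
      exact ⟨hr'.1, by linarith⟩
    refine le_trans (measure_mono hsub) (le_trans (shell3 x _ hx.le hx1 hu) ?_)
    exact le_refl _

/-- distribution bound for `fl` on `S1` -/
lemma distr_lam {p : E3} (hp : p ≠ 0) {t : ℝ} (ht : 0 < t) :
    volume ({r | t < fl p r} ∩ S1 p)
      ≤ min (ENNReal.ofReal κ₁)
        (ENNReal.ofReal ((κ₂ / (2*‖p‖)) * t ^ (-((4:ℝ)/3)))) := by
  have hnp : (0:ℝ) < ‖p‖ := norm_pos_iff.mpr hp
  refine le_min ?_ ?_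
  · refine le_trans (measure_mono (fun r hr => S1_subset p hr.2)) ?_
    rw [vol_ball3 1 zero_le_one]
    exact ENNReal.ofReal_le_ofReal (by norm_num)
  · set u : ℝ := t ^ (-((2:ℝ)/3)) with hudef
    have hu : (0:ℝ) < u := Real.rpow_pos_of_pos ht _
    set w : E3 := ‖p‖⁻¹ • p with hwdef
    have hw : ‖w‖ = 1 := norm_smul_inv_norm hp
    have hsub : {r | t < fl p r} ∩ S1 p
        ⊆ {r : E3 | (‖r‖ < 1 ∧ 1 - u < ‖r‖^2) ∧
            -‖p‖/2 < (inner ℝ r w : ℝ) ∧ (inner ℝ r w : ℝ) < (u - ‖p‖^2) / (2*‖p‖)} := by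
      rintro r ⟨ht', hr⟩
      obtain ⟨hl1, hl2⟩ := lam_pos hr
      have hmax : max (lam p r) 0 = lam p r := max_eq_left hl2.le
      have hlt : lam p r < u := by
        have ht'' : t < (lam p r) ^ (-(3:ℝ)/2) := by
          simpa [fl, hmax] using ht'
        have h2 : ((lam p r) ^ (-(3:ℝ)/2)) ^ (-((2:ℝ)/3)) < t ^ (-((2:ℝ)/3)) :=
          Real.rpow_lt_rpow_of_neg ht ht'' (by norm_num)
        rwa [← Real.rpow_mul hl2.le, show (-(3:ℝ)/2) * (-((2:ℝ)/3)) = 1 by norm_num,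
          Real.rpow_one] at h2
      have hid : lam p r = 2 * (inner ℝ r p : ℝ) + ‖p‖^2 := by
        unfold lam; rw [norm_add_sq_real]; ring
      have hin : (inner ℝ r w : ℝ) = (inner ℝ r p : ℝ) / ‖p‖ := by
        rw [hwdef, real_inner_smul_right]; field_simp
      have hr2 : ‖r‖^2 < 1 := by nlinarith [norm_nonneg r, hr.1]
      refine ⟨⟨hr.1, by linarith⟩, ?_, ?_⟩
      · rw [hin, lt_div_iff₀ hnp]
        nlinarith
      · rw [hin, div_lt_div_iff₀ hnp (by linarith : (0:ℝ) < 2*‖p‖)]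
        nlinarith
    refine le_trans (measure_mono hsub) (le_trans (slabshell w hw u _ _ hu) ?_)
    refine ENNReal.ofReal_le_ofReal (le_of_eq ?_)
    have hb : (u - ‖p‖^2) / (2*‖p‖) - (-‖p‖/2) = u / (2*‖p‖) := by
      field_simp; ring
    rw [hb]
    have husq : u * u = t ^ (-((4:ℝ)/3)) := by
      rw [hudef, ← Real.rpow_add ht]; norm_num
    have hre : κ₂ * u * (u / (2*‖p‖)) = (κ₂ / (2*‖p‖)) * (u * u) := by
      field_simp
    rw [hre, husq]

lemma int_fm {x : ℝ} (hx : 0 < x) (hx1 : x ≤ 1) (p : E3) :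
    ∫⁻ r' in S2 x p, ENNReal.ofReal (fm p r') ≤ ENNReal.ofReal ((5/2) * κ₁) := by
  have h := lcA (volume.restrict (S2 x p)) (fm_meas p) (fm_nonneg p)
    (κ₁_nonneg) (mul_nonneg (by norm_num) κ₁_nonneg : (0:ℝ) ≤ (3/2) * κ₁) (by norm_num : (1:ℝ) < 2) one_pos
    (fun t ht => by
      rw [Measure.restrict_apply (measurableSet_lt measurable_const (fm_meas p))]
      exact distr_mu hx hx1 p ht)
  refine le_trans h (ENNReal.ofReal_le_ofReal (le_of_eq ?_))
  rw [Real.one_rpow]; ring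

lemma int_fl {p : E3} (hp : p ≠ 0) :
    ∫⁻ r in S1 p, ENNReal.ofReal (fl p r)
      ≤ ENNReal.ofReal ((κ₁ + (3/2) * κ₂) * ‖p‖ ^ (-((3:ℝ)/4))) := by
  have hnp : (0:ℝ) < ‖p‖ := norm_pos_iff.mpr hp
  have hs₀ : (0:ℝ) < ‖p‖ ^ (-((3:ℝ)/4)) := Real.rpow_pos_of_pos hnp _
  have h := lcA (volume.restrict (S1 p)) (fl_meas p) (fl_nonneg p)
    (κ₁_nonneg) (div_nonneg κ₂_nonneg (by positivity) : (0:ℝ) ≤ κ₂ / (2*‖p‖)) (by norm_num : (1:ℝ) < (4:ℝ)/3) hs₀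
    (fun t ht => by
      rw [Measure.restrict_apply (measurableSet_lt measurable_const (fl_meas p))]
      exact distr_lam hp ht)
  refine le_trans h (ENNReal.ofReal_le_ofReal (le_of_eq ?_))
  have h1 : (‖p‖ ^ (-((3:ℝ)/4))) ^ ((1:ℝ) - (4:ℝ)/3) = ‖p‖ ^ ((1:ℝ)/4) := by
    rw [← Real.rpow_mul hnp.le]; norm_num
  have h2 : ‖p‖ ^ ((1:ℝ)/4) / ‖p‖ = ‖p‖ ^ (-((3:ℝ)/4)) := by
    rw [div_eq_mul_inv, ← Real.rpow_neg_one ‖p‖, ← Real.rpow_add hnp]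
    norm_num
  rw [h1, show ((4:ℝ)/3 - 1) = 1/3 by norm_num]
  have h3 : κ₂ / (2*‖p‖) * ‖p‖ ^ ((1:ℝ)/4) / (1/3) = (3/2) * κ₂ * (‖p‖ ^ ((1:ℝ)/4) / ‖p‖) := by
    field_simp
  rw [h3, h2]; ring

def gg (ε : ℝ) (p r r' : E3) : ℝ :=
  1 / (‖r + p‖ ^ 2 - ‖r‖ ^ 2 + ‖r' - p‖ ^ 2 - ‖r'‖ ^ 2 + 2 * ε)
    - 1 / (‖r + p‖ ^ 2 - ‖r‖ ^ 2 + ‖r' - p‖ ^ 2 - ‖r'‖ ^ 2)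

lemma S1_meas (p : E3) : MeasurableSet (S1 p) := by
  have : IsOpen (S1 p) := (isOpen_lt (by fun_prop) (by fun_prop)).and
    (isOpen_lt (by fun_prop) (by fun_prop))
  exact this.measurableSet

lemma rpow_add_half (L : ℝ) (hL : 0 < L) : L ^ ((3:ℝ)/2) * L ^ ((1:ℝ)/2) = L ^ 2 := by
  rw [← Real.rpow_add hL, show (3:ℝ)/2 + 1/2 = (2:ℕ) by norm_num, Real.rpow_natCast]

lemma g_pointwise {ε x : ℝ} {p r r' : E3} (hε : 0 < ε) (hx : 0 < x)
    (hr : r ∈ S1 p) (hr' : r' ∈ S2 x p) :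
    |gg ε p r r'| ≤ 2 * ε * (fl p r * fm p r') := by
  set L := lam p r with hLdef
  set M := mu p r' with hMdef
  have hL : 0 < L := (lam_pos hr).2
  have hM : 0 < M := (mu_pos hx hr').2
  have hD : ‖r + p‖ ^ 2 - ‖r‖ ^ 2 + ‖r' - p‖ ^ 2 - ‖r'‖ ^ 2 = L + M := by
    rw [hLdef, hMdef]; unfold lam mu; ring
  have hDpos : 0 < L + M := by linarith
  have hDepos : 0 < L + M + 2*ε := by linarith
  have habs : |gg ε p r r'| = 2*ε / ((L+M) * (L+M+2*ε)) := by
    unfold gg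
    rw [hD]
    rw [abs_of_nonpos]
    · field_simp; ring
    · have h1 : 1/(L+M+2*ε) ≤ 1/(L+M) :=
        one_div_le_one_div_of_le hDpos (by linarith)
      linarith
  rw [habs]
  -- D² ≥ L^{3/2} M^{1/2}
  have hkey : L ^ ((3:ℝ)/2) * M ^ ((1:ℝ)/2) ≤ (L+M) * (L+M+2*ε) := by
    have hsq : L ^ ((3:ℝ)/2) * M ^ ((1:ℝ)/2) ≤ (L+M)^2 := by
      rcases le_total L M with hLM | hLM
      · have h1 : L ^ ((3:ℝ)/2) ≤ M ^ ((3:ℝ)/2) := Real.rpow_le_rpow hL.le hLM (by norm_num)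
        have h2 : L ^ ((3:ℝ)/2) * M ^ ((1:ℝ)/2) ≤ M ^ ((3:ℝ)/2) * M ^ ((1:ℝ)/2) :=
          mul_le_mul_of_nonneg_right h1 (Real.rpow_nonneg hM.le _)
        rw [rpow_add_half M hM] at h2
        nlinarith
      · have h1 : M ^ ((1:ℝ)/2) ≤ L ^ ((1:ℝ)/2) := Real.rpow_le_rpow hM.le hLM (by norm_num)
        have h2 : L ^ ((3:ℝ)/2) * M ^ ((1:ℝ)/2) ≤ L ^ ((3:ℝ)/2) * L ^ ((1:ℝ)/2) :=
          mul_le_mul_of_nonneg_left h1 (Real.rpow_nonneg hL.le _)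
        rw [rpow_add_half L hL] at h2
        nlinarith
    nlinarith [mul_pos hDpos hDpos, mul_pos hDpos hDepos]
  have hfl : fl p r = (L ^ ((3:ℝ)/2))⁻¹ := by
    unfold fl
    rw [← hLdef, max_eq_left hL.le, show (-(3:ℝ)/2) = -((3:ℝ)/2) by norm_num,
      Real.rpow_neg hL.le]
  have hfm : fm p r' = (M ^ ((1:ℝ)/2))⁻¹ := by
    unfold fm
    rw [← hMdef, max_eq_left hM.le, show (-(1:ℝ)/2) = -((1:ℝ)/2) by norm_num,
      Real.rpow_neg hM.le]
  have hLM2 : 0 < L ^ ((3:ℝ)/2) * M ^ ((1:ℝ)/2) :=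
    mul_pos (Real.rpow_pos_of_pos hL _) (Real.rpow_pos_of_pos hM _)
  calc 2*ε / ((L+M) * (L+M+2*ε)) ≤ 2*ε / (L ^ ((3:ℝ)/2) * M ^ ((1:ℝ)/2)) := by
        gcongr
    _ = 2 * ε * (fl p r * fm p r') := by
        rw [hfl, hfm]; field_simp

lemma g_pointwise_large {ε x : ℝ} {p r r' : E3} (hε : 0 < ε) (hx : 0 < x)
    (hp3 : 3 ≤ ‖p‖) (hr : r ∈ S1 p) (hr' : r' ∈ S2 x p) :
    |gg ε p r r'| ≤ 18 * ε * ‖p‖ ^ (-(4:ℝ)) := by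
  set L := lam p r with hLdef
  set M := mu p r' with hMdef
  have hL : 0 < L := (lam_pos hr).2
  have hM : 0 < M := (mu_pos hx hr').2
  have hD : ‖r + p‖ ^ 2 - ‖r‖ ^ 2 + ‖r' - p‖ ^ 2 - ‖r'‖ ^ 2 = L + M := by
    rw [hLdef, hMdef]; unfold lam mu; ring
  have hDpos : 0 < L + M := by linarith
  have hDepos : 0 < L + M + 2*ε := by linarith
  have habs : |gg ε p r r'| = 2*ε / ((L+M) * (L+M+2*ε)) := by
    unfold gg
    rw [hD, abs_of_nonpos]
    · field_simp; ring
    · have h1 : 1/(L+M+2*ε) ≤ 1/(L+M) :=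
        one_div_le_one_div_of_le hDpos (by linarith)
      linarith
  rw [habs]
  -- L ≥ ‖p‖²/3
  have hrp : ‖p‖ - ‖r‖ ≤ ‖r + p‖ := by
    have := norm_sub_le (r + p) r
    simp only [add_sub_cancel_left] at this
    linarith
  have hr1 : ‖r‖ < 1 := hr.1
  have hLlb : ‖p‖^2 / 3 ≤ L := by
    have h2 : (0:ℝ) ≤ ‖p‖ - ‖r‖ := by linarith
    have h3 : (‖p‖ - ‖r‖)^2 ≤ ‖r + p‖^2 := by nlinarith [norm_nonneg (r+p)]
    have : L = ‖r + p‖^2 - ‖r‖^2 := rfl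
    nlinarith [norm_nonneg r, norm_nonneg p]
  have hp4 : ‖p‖ ^ (-(4:ℝ)) = ((‖p‖^2/3) * (‖p‖^2/3) * 9)⁻¹ := by
    rw [Real.rpow_neg (norm_nonneg p), show (4:ℝ) = ((4:ℕ):ℝ) by norm_num,
      Real.rpow_natCast]
    congr 1
    field_simp
    ring
  rw [hp4]
  have hq : 0 < ‖p‖^2/3 := by positivity
  have hkey : (‖p‖^2/3) * (‖p‖^2/3) ≤ (L+M) * (L+M+2*ε) := by
    nlinarith
  rw [div_eq_mul_inv]
  have h18 : 2*ε * ((L+M)*(L+M+2*ε))⁻¹ ≤ 2*ε * ((‖p‖^2/3) * (‖p‖^2/3))⁻¹ := by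
    gcongr
  refine le_trans h18 (le_of_eq ?_)
  rw [mul_inv, mul_inv, mul_inv]
  field_simp
  ring

lemma inner_bound {ε x : ℝ} (hε : 0 < ε) (hx : 0 < x) (hx1 : x ≤ 1) {p r : E3}
    (hr : r ∈ S1 p) :
    ‖∫ r' in S2 x p, gg ε p r r'‖ ≤ 2 * ε * ((5/2) * κ₁) * fl p r := by
  refine le_trans (norm_integral_le_lintegral_norm _) ?_
  refine ENNReal.toReal_le_of_le_ofReal
    (mul_nonneg (mul_nonneg (by positivity) (mul_nonneg (by norm_num) κ₁_nonneg))
      (fl_nonneg p r)) ?_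
  calc ∫⁻ r' in S2 x p, ENNReal.ofReal ‖gg ε p r r'‖
      ≤ ∫⁻ r' in S2 x p, ENNReal.ofReal (2 * ε * fl p r * fm p r') := by
        refine setLIntegral_mono' (by
          have : IsOpen (S2 x p) := (isOpen_lt (by fun_prop) (by fun_prop)).and
            (isOpen_lt (by fun_prop) (by fun_prop))
          exact this.measurableSet) fun r' hr' => ?_
        refine ENNReal.ofReal_le_ofReal ?_
        rw [Real.norm_eq_abs]
        have := g_pointwise hε hx hr hr'
        linarith [this]
    _ = ENNReal.ofReal (2 * ε * fl p r) * ∫⁻ r' in S2 x p, ENNReal.ofReal (fm p r') := by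
        rw [← lintegral_const_mul _ ((fm_meas p).ennreal_ofReal)]
        refine lintegral_congr fun r' => ?_
        rw [← ENNReal.ofReal_mul (mul_nonneg (by positivity) (fl_nonneg p r))]
    _ ≤ ENNReal.ofReal (2 * ε * fl p r) * ENNReal.ofReal ((5/2) * κ₁) := by
        exact mul_le_mul_right (int_fm hx hx1 p) _
    _ = ENNReal.ofReal (2 * ε * ((5/2) * κ₁) * fl p r) := by
        rw [← ENNReal.ofReal_mul (mul_nonneg (by positivity) (fl_nonneg p r))]
        congr 1
        ring

lemma mid_bound {ε x : ℝ} (hε : 0 < ε) (hx : 0 < x) (hx1 : x ≤ 1) {p : E3} (hp : p ≠ 0) :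
    ‖∫ r in S1 p, ∫ r' in S2 x p, gg ε p r r'‖
      ≤ 5 * κ₁ * (κ₁ + (3/2) * κ₂) * ε * ‖p‖ ^ (-((3:ℝ)/4)) := by
  have hk : (0:ℝ) ≤ 5 * κ₁ * (κ₁ + (3/2) * κ₂) := by
    have := κ₁_nonneg; have := κ₂_nonneg
    apply mul_nonneg (by linarith) (by linarith)
  refine le_trans (norm_integral_le_lintegral_norm _) ?_
  refine ENNReal.toReal_le_of_le_ofReal
    (mul_nonneg (mul_nonneg hk hε.le) (Real.rpow_nonneg (norm_nonneg p) _)) ?_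
  calc ∫⁻ r in S1 p, ENNReal.ofReal ‖∫ r' in S2 x p, gg ε p r r'‖
      ≤ ∫⁻ r in S1 p, ENNReal.ofReal (2 * ε * ((5/2) * κ₁) * fl p r) :=
        setLIntegral_mono' (S1_meas p) fun r hr =>
          ENNReal.ofReal_le_ofReal (inner_bound hε hx hx1 hr)
    _ = ENNReal.ofReal (2 * ε * ((5/2) * κ₁)) * ∫⁻ r in S1 p, ENNReal.ofReal (fl p r) := by
        rw [← lintegral_const_mul _ ((fl_meas p).ennreal_ofReal)]
        refine lintegral_congr fun r => ?_
        rw [← ENNReal.ofReal_mul (mul_nonneg (by positivity) (mul_nonneg (by norm_num) κ₁_nonneg))]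
    _ ≤ ENNReal.ofReal (2 * ε * ((5/2) * κ₁))
          * ENNReal.ofReal ((κ₁ + (3/2) * κ₂) * ‖p‖ ^ (-((3:ℝ)/4))) :=
        mul_le_mul_right (int_fl hp) _
    _ = ENNReal.ofReal (5 * κ₁ * (κ₁ + (3/2) * κ₂) * ε * ‖p‖ ^ (-((3:ℝ)/4))) := by
        rw [← ENNReal.ofReal_mul (mul_nonneg (by positivity) (mul_nonneg (by norm_num) κ₁_nonneg))]
        congr 1
        ring

lemma mid_bound_large {ε x : ℝ} (hε : 0 < ε) (hx : 0 < x) (hx1 : x ≤ 1) {p : E3}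
    (hp3 : 3 ≤ ‖p‖) :
    ‖∫ r in S1 p, ∫ r' in S2 x p, gg ε p r r'‖ ≤ 18 * κ₁^2 * ε * ‖p‖ ^ (-(4:ℝ)) := by
  have hrp : (0:ℝ) ≤ ‖p‖ ^ (-(4:ℝ)) := Real.rpow_nonneg (norm_nonneg p) _
  have hS2v : volume (S2 x p) ≤ ENNReal.ofReal κ₁ := by
    refine le_trans (measure_mono (S2_subset hx1 p)) ?_
    rw [vol_ball3 1 zero_le_one]
    exact ENNReal.ofReal_le_ofReal (by norm_num)
  have hS1v : volume (S1 p) ≤ ENNReal.ofReal κ₁ := by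
    refine le_trans (measure_mono (S1_subset p)) ?_
    rw [vol_ball3 1 zero_le_one]
    exact ENNReal.ofReal_le_ofReal (by norm_num)
  have hinner : ∀ r ∈ S1 p, ‖∫ r' in S2 x p, gg ε p r r'‖
      ≤ 18 * ε * ‖p‖ ^ (-(4:ℝ)) * κ₁ := by
    intro r hr
    refine le_trans (norm_integral_le_lintegral_norm _) ?_
    refine ENNReal.toReal_le_of_le_ofReal
      (mul_nonneg (mul_nonneg (by positivity) hrp) κ₁_nonneg) ?_
    calc ∫⁻ r' in S2 x p, ENNReal.ofReal ‖gg ε p r r'‖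
        ≤ ∫⁻ _ in S2 x p, ENNReal.ofReal (18 * ε * ‖p‖ ^ (-(4:ℝ))) := by
          refine setLIntegral_mono' (by
            have : IsOpen (S2 x p) := (isOpen_lt (by fun_prop) (by fun_prop)).and
              (isOpen_lt (by fun_prop) (by fun_prop))
            exact this.measurableSet) fun r' hr' => ?_
          refine ENNReal.ofReal_le_ofReal ?_
          rw [Real.norm_eq_abs]
          exact g_pointwise_large hε hx hp3 hr hr'
      _ = ENNReal.ofReal (18 * ε * ‖p‖ ^ (-(4:ℝ))) * volume (S2 x p) :=
          setLIntegral_const _ _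
      _ ≤ ENNReal.ofReal (18 * ε * ‖p‖ ^ (-(4:ℝ))) * ENNReal.ofReal κ₁ :=
          mul_le_mul_right hS2v _
      _ = ENNReal.ofReal (18 * ε * ‖p‖ ^ (-(4:ℝ)) * κ₁) := by
          rw [← ENNReal.ofReal_mul (mul_nonneg (by positivity) hrp)]
  refine le_trans (norm_integral_le_lintegral_norm _) ?_
  refine ENNReal.toReal_le_of_le_ofReal
    (mul_nonneg (mul_nonneg (by positivity) hε.le) hrp) ?_
  calc ∫⁻ r in S1 p, ENNReal.ofReal ‖∫ r' in S2 x p, gg ε p r r'‖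
      ≤ ∫⁻ _ in S1 p, ENNReal.ofReal (18 * ε * ‖p‖ ^ (-(4:ℝ)) * κ₁) :=
        setLIntegral_mono' (S1_meas p) fun r hr =>
          ENNReal.ofReal_le_ofReal (hinner r hr)
    _ = ENNReal.ofReal (18 * ε * ‖p‖ ^ (-(4:ℝ)) * κ₁) * volume (S1 p) :=
        setLIntegral_const _ _
    _ ≤ ENNReal.ofReal (18 * ε * ‖p‖ ^ (-(4:ℝ)) * κ₁) * ENNReal.ofReal κ₁ :=
        mul_le_mul_right hS1v _
    _ ≤ ENNReal.ofReal (18 * κ₁^2 * ε * ‖p‖ ^ (-(4:ℝ))) := by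
        rw [← ENNReal.ofReal_mul (mul_nonneg (mul_nonneg (by positivity) hrp) κ₁_nonneg)]
        exact ENNReal.ofReal_le_ofReal (le_of_eq (by ring))

lemma distr_psi {t : ℝ} (ht : 0 < t) :
    volume ({p : E3 | t < ‖p‖ ^ (-((3:ℝ)/4))} ∩ ball 0 3)
      ≤ min (ENNReal.ofReal (κ₁ * 27)) (ENNReal.ofReal (κ₁ * t ^ (-(4:ℝ)))) := by
  refine le_min ?_ ?_
  · refine le_trans (measure_mono inter_subset_right) ?_
    rw [vol_ball3 3 (by norm_num)]
    exact ENNReal.ofReal_le_ofReal (by norm_num)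
  · have hsub : {p : E3 | t < ‖p‖ ^ (-((3:ℝ)/4))} ∩ ball 0 3
        ⊆ ball (0:E3) (t ^ (-((4:ℝ)/3))) := by
      rintro p ⟨hp1, _⟩
      simp only [mem_setOf_eq] at hp1
      simp only [mem_ball, dist_zero_right]
      have hnp : 0 < ‖p‖ := by
        rcases eq_or_lt_of_le (norm_nonneg p) with h | h
        · exfalso
          rw [← h, Real.zero_rpow (by norm_num : -((3:ℝ)/4) ≠ 0)] at hp1
          linarith
        · exact h
      have h2 : (‖p‖ ^ (-((3:ℝ)/4))) ^ (-((4:ℝ)/3)) < t ^ (-((4:ℝ)/3)) :=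
        Real.rpow_lt_rpow_of_neg ht hp1 (by norm_num)
      rwa [← Real.rpow_mul hnp.le, show (-((3:ℝ)/4)) * (-((4:ℝ)/3)) = 1 by norm_num,
        Real.rpow_one] at h2
    refine le_trans (measure_mono hsub) ?_
    rw [vol_ball3 _ (Real.rpow_nonneg ht.le _)]
    refine ENNReal.ofReal_le_ofReal (le_of_eq ?_)
    congr 1
    rw [← Real.rpow_natCast (t ^ (-((4:ℝ)/3))) 3, ← Real.rpow_mul ht.le]
    norm_num

lemma distr_phi {t : ℝ} (ht : 0 < t) :
    volume ({p : E3 | t < ‖p‖ ^ (-(4:ℝ))} ∩ (ball (0:E3) 3)ᶜ)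
      ≤ ENNReal.ofReal (κ₁ * t ^ (-((3:ℝ)/4))) := by
  have hsub : {p : E3 | t < ‖p‖ ^ (-(4:ℝ))} ∩ (ball (0:E3) 3)ᶜ
      ⊆ ball (0:E3) (t ^ (-((1:ℝ)/4))) := by
    rintro p ⟨hp1, _⟩
    simp only [mem_setOf_eq] at hp1
    simp only [mem_ball, dist_zero_right]
    have hnp : 0 < ‖p‖ := by
      rcases eq_or_lt_of_le (norm_nonneg p) with h | h
      · exfalso
        rw [← h, Real.zero_rpow (by norm_num : -(4:ℝ) ≠ 0)] at hp1
        linarith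
      · exact h
    have h2 : (‖p‖ ^ (-(4:ℝ))) ^ (-((1:ℝ)/4)) < t ^ (-((1:ℝ)/4)) :=
      Real.rpow_lt_rpow_of_neg ht hp1 (by norm_num)
    rwa [← Real.rpow_mul hnp.le, show (-(4:ℝ)) * (-((1:ℝ)/4)) = 1 by norm_num,
      Real.rpow_one] at h2
  refine le_trans (measure_mono hsub) ?_
  rw [vol_ball3 _ (Real.rpow_nonneg ht.le _)]
  refine ENNReal.ofReal_le_ofReal (le_of_eq ?_)
  congr 1
  rw [← Real.rpow_natCast (t ^ (-((1:ℝ)/4))) 3, ← Real.rpow_mul ht.le]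
  norm_num

lemma distr_phi0 {t : ℝ} (ht : (1:ℝ)/81 ≤ t) :
    volume ({p : E3 | t < ‖p‖ ^ (-(4:ℝ))} ∩ (ball (0:E3) 3)ᶜ) = 0 := by
  convert measure_empty (μ := (volume : Measure E3))
  refine eq_empty_iff_forall_notMem.mpr ?_
  rintro p ⟨hp1, hp2⟩
  simp only [mem_setOf_eq] at hp1
  simp only [mem_compl_iff, mem_ball, dist_zero_right, not_lt] at hp2
  have h81 : (81:ℝ) ≤ ‖p‖^(4:ℕ) := by
    calc (81:ℝ) = 3^(4:ℕ) := by norm_num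
    _ ≤ ‖p‖^(4:ℕ) := pow_le_pow_left₀ (by norm_num) hp2 4
  have : ‖p‖ ^ (-(4:ℝ)) = (‖p‖^(4:ℕ))⁻¹ := by
    rw [Real.rpow_neg (norm_nonneg p), show (4:ℝ) = ((4:ℕ):ℝ) by norm_num,
      Real.rpow_natCast]
  rw [this] at hp1
  have : (‖p‖^(4:ℕ))⁻¹ ≤ 1/81 := by
    rw [one_div]
    exact inv_anti₀ (by norm_num) h81
  linarith

lemma int_psi : ∫⁻ p in ball (0:E3) 3, ENNReal.ofReal (‖p‖ ^ (-((3:ℝ)/4)))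
    ≤ ENNReal.ofReal (κ₁ * 27 + κ₁ / 3) := by
  have h := lcA (volume.restrict (ball (0:E3) 3))
    (f := fun p : E3 => ‖p‖ ^ (-((3:ℝ)/4))) (by fun_prop)
    (fun p => Real.rpow_nonneg (norm_nonneg p) _)
    (mul_nonneg κ₁_nonneg (by norm_num) : (0:ℝ) ≤ κ₁ * 27) κ₁_nonneg
    (by norm_num : (1:ℝ) < 4) one_pos
    (fun t ht => by
      rw [Measure.restrict_apply (measurableSet_lt measurable_const (by fun_prop))]
      exact distr_psi ht)
  refine le_trans h (ENNReal.ofReal_le_ofReal (le_of_eq ?_))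
  rw [Real.one_rpow]
  ring

lemma int_phi : ∫⁻ p in (ball (0:E3) 3)ᶜ, ENNReal.ofReal (‖p‖ ^ (-(4:ℝ)))
    ≤ ENNReal.ofReal (κ₁ * (4/3)) := by
  have h := lcB (volume.restrict (ball (0:E3) 3)ᶜ)
    (f := fun p : E3 => ‖p‖ ^ (-(4:ℝ))) (by fun_prop)
    (fun p => Real.rpow_nonneg (norm_nonneg p) _)
    (c := κ₁) (θ := (3:ℝ)/4) (T := 1/81) κ₁_nonneg (by norm_num) (by norm_num) (by norm_num)
    (fun t ht => by
      rw [Measure.restrict_apply (measurableSet_lt measurable_const (by fun_prop))]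
      exact distr_phi ht)
    (fun t ht => by
      rw [Measure.restrict_apply (measurableSet_lt measurable_const (by fun_prop))]
      exact distr_phi0 ht)
  refine le_trans h (ENNReal.ofReal_le_ofReal (le_of_eq ?_))
  have h13 : ((1:ℝ)/81) ^ ((1:ℝ) - (3:ℝ)/4) = 1/3 := by
    rw [show (1:ℝ) - (3:ℝ)/4 = 1/4 by norm_num,
      show (1:ℝ)/81 = ((1:ℝ)/3)^(4:ℕ) by norm_num,
      ← Real.rpow_natCast ((1:ℝ)/3) 4, ← Real.rpow_mul (by norm_num)]
    norm_num
  rw [h13]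
  ring

end
end GapAux

set_option maxHeartbeats 2000000 in
open GapAux Metric Set ENNReal Real in
/-- Removing the spectral gap `2ρ^{2/3+δ}`: the difference of the two integrals is
`O(ρ^{2/3+δ})`, uniformly in `0 < x ≤ 1`. -/
theorem gap_removal_bound :
    ∃ C : ℝ, 0 < C ∧ ∀ δ ρ x : ℝ, 0 < δ → 0 < ρ → 0 < x → x ≤ 1 →
      |∫ p : EuclideanSpace ℝ (Fin 3),
          ∫ r in {r : EuclideanSpace ℝ (Fin 3) | ‖r‖ < 1 ∧ 1 < ‖r + p‖},
            ∫ r' in {r' : EuclideanSpace ℝ (Fin 3) | ‖r'‖ < x ∧ x < ‖r' - p‖},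
              (1 / (‖r + p‖ ^ 2 - ‖r‖ ^ 2 + ‖r' - p‖ ^ 2 - ‖r'‖ ^ 2 + 2 * ρ ^ ((2:ℝ)/3 + δ))
                - 1 / (‖r + p‖ ^ 2 - ‖r‖ ^ 2 + ‖r' - p‖ ^ 2 - ‖r'‖ ^ 2))|
        ≤ C * ρ ^ ((2:ℝ)/3 + δ) := by
  classical
  refine ⟨5 * κ₁ * (κ₁ + (3/2) * κ₂) * (κ₁ * 27 + κ₁ / 3) + 18 * κ₁^2 * (κ₁ * (4/3)) + 1,
    ?_, ?_⟩
  · have h1 := κ₁_nonneg; have h2 := κ₂_nonneg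
    have ha : (0:ℝ) ≤ 5 * κ₁ * (κ₁ + (3/2) * κ₂) * (κ₁ * 27 + κ₁ / 3) := by
      apply mul_nonneg (mul_nonneg (by linarith) (by linarith)) (by linarith)
    have hb : (0:ℝ) ≤ 18 * κ₁^2 * (κ₁ * (4/3)) := by
      apply mul_nonneg (by positivity) (by linarith)
    linarith
  · intro δ ρ x hδ hρ hx hx1
    have h1 := κ₁_nonneg; have h2 := κ₂_nonneg
    have ha : (0:ℝ) ≤ 5 * κ₁ * (κ₁ + (3/2) * κ₂) * (κ₁ * 27 + κ₁ / 3) := by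
      apply mul_nonneg (mul_nonneg (by linarith) (by linarith)) (by linarith)
    have hb : (0:ℝ) ≤ 18 * κ₁^2 * (κ₁ * (4/3)) := by
      apply mul_nonneg (by positivity) (by linarith)
    set ε := ρ ^ ((2:ℝ)/3 + δ) with hεdef
    have hε : 0 < ε := Real.rpow_pos_of_pos hρ _
    show |∫ p : E3, ∫ r in S1 p, ∫ r' in S2 x p, gg ε p r r'| ≤ _
    rw [← Real.norm_eq_abs]
    refine le_trans (norm_integral_le_lintegral_norm _) ?_
    refine ENNReal.toReal_le_of_le_ofReal
      (mul_nonneg (by linarith) hε.le) ?_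
    rw [← lintegral_add_compl
      (fun p : E3 => ENNReal.ofReal ‖∫ r in S1 p, ∫ r' in S2 x p, gg ε p r r'‖)
      (measurableSet_ball : MeasurableSet (ball (0:E3) 3))]
    have piece1 : ∫⁻ p in ball (0:E3) 3,
        ENNReal.ofReal ‖∫ r in S1 p, ∫ r' in S2 x p, gg ε p r r'‖
        ≤ ENNReal.ofReal (5 * κ₁ * (κ₁ + (3/2) * κ₂) * ε)
            * ENNReal.ofReal (κ₁ * 27 + κ₁ / 3) := by
      have hk : (0:ℝ) ≤ 5 * κ₁ * (κ₁ + (3/2) * κ₂) * ε :=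
        mul_nonneg (mul_nonneg (by linarith) (by linarith)) hε.le
      calc ∫⁻ p in ball (0:E3) 3,
            ENNReal.ofReal ‖∫ r in S1 p, ∫ r' in S2 x p, gg ε p r r'‖
          ≤ ∫⁻ p in ball (0:E3) 3,
              ENNReal.ofReal (5 * κ₁ * (κ₁ + (3/2) * κ₂) * ε * ‖p‖ ^ (-((3:ℝ)/4))) := by
            refine setLIntegral_mono' measurableSet_ball fun p _ => ?_
            by_cases hp0 : p = 0
            · subst hp0
              have hS1e : S1 (0:E3) = ∅ := by
                refine eq_empty_iff_forall_notMem.mpr fun r hr => ?_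
                obtain ⟨hr1, hr2⟩ := hr
                rw [add_zero] at hr2
                linarith
              rw [hS1e]
              simp only [Measure.restrict_empty, integral_zero_measure, norm_zero,
                ENNReal.ofReal_zero]
              exact zero_le
            · exact ENNReal.ofReal_le_ofReal (mid_bound hε hx hx1 hp0)
        _ = ENNReal.ofReal (5 * κ₁ * (κ₁ + (3/2) * κ₂) * ε)
              * ∫⁻ p in ball (0:E3) 3, ENNReal.ofReal (‖p‖ ^ (-((3:ℝ)/4))) := by
            rw [← lintegral_const_mul _ (by fun_prop : Measurable
              (fun p : E3 => ENNReal.ofReal (‖p‖ ^ (-((3:ℝ)/4)))))]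
            refine lintegral_congr fun p => ?_
            rw [← ENNReal.ofReal_mul hk]
        _ ≤ ENNReal.ofReal (5 * κ₁ * (κ₁ + (3/2) * κ₂) * ε)
              * ENNReal.ofReal (κ₁ * 27 + κ₁ / 3) :=
            mul_le_mul_right int_psi _
    have piece2 : ∫⁻ p in (ball (0:E3) 3)ᶜ,
        ENNReal.ofReal ‖∫ r in S1 p, ∫ r' in S2 x p, gg ε p r r'‖
        ≤ ENNReal.ofReal (18 * κ₁^2 * ε) * ENNReal.ofReal (κ₁ * (4/3)) := by
      have hk : (0:ℝ) ≤ 18 * κ₁^2 * ε := mul_nonneg (by positivity) hε.le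
      calc ∫⁻ p in (ball (0:E3) 3)ᶜ,
            ENNReal.ofReal ‖∫ r in S1 p, ∫ r' in S2 x p, gg ε p r r'‖
          ≤ ∫⁻ p in (ball (0:E3) 3)ᶜ,
              ENNReal.ofReal (18 * κ₁^2 * ε * ‖p‖ ^ (-(4:ℝ))) := by
            refine setLIntegral_mono' measurableSet_ball.compl fun p hp => ?_
            have hp3 : (3:ℝ) ≤ ‖p‖ := by
              simpa [mem_compl_iff, mem_ball, dist_zero_right, not_lt] using hp
            exact ENNReal.ofReal_le_ofReal (mid_bound_large hε hx hx1 hp3)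
        _ = ENNReal.ofReal (18 * κ₁^2 * ε)
              * ∫⁻ p in (ball (0:E3) 3)ᶜ, ENNReal.ofReal (‖p‖ ^ (-(4:ℝ))) := by
            rw [← lintegral_const_mul _ (by fun_prop : Measurable
              (fun p : E3 => ENNReal.ofReal (‖p‖ ^ (-(4:ℝ)))))]
            refine lintegral_congr fun p => ?_
            rw [← ENNReal.ofReal_mul hk]
        _ ≤ ENNReal.ofReal (18 * κ₁^2 * ε) * ENNReal.ofReal (κ₁ * (4/3)) :=
            mul_le_mul_right int_phi _
    refine le_trans (add_le_add piece1 piece2) ?_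
    rw [← ENNReal.ofReal_mul (mul_nonneg (mul_nonneg (by linarith) (by linarith)) hε.le),
      ← ENNReal.ofReal_mul (mul_nonneg (by positivity) hε.le),
      ← ENNReal.ofReal_add (by nlinarith) (by nlinarith)]
    refine ENNReal.ofReal_le_ofReal ?_
    nlinarith [hε.le, ha, hb, mul_nonneg ha hε.le, mul_nonneg hb hε.le]
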